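/- arXiv:0907.1609 — 2 statements merged into one kernel-verified Lean document; each statement's English description precedes it below -/
import Mathlib

section
/- Let α > 0, β > 0, T > 0 and 0 < γ < 1, set c = e^{−αT}, and let P : [0, β] → [0, β] be the map P(x) = γ·β·x / (x + (β − x)·c). If c < γ, then P has exactly two fixed points in [0, β], namely x = 0 and x* = β·(γ − c)/(1 − c), and 0 < x* < β. -/
/-!
Clearing the (positive) denominator, `P x = x` becomes `x · (γβ − (x + (β − x)c)) = 0`, so a
fixed point is either `0` or a root of the linear equation `x(1 − c) = β(γ − c)`. Since
`0 < c < γ < 1`, that root lies strictly between `0` and `β`.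
-/

theorem mul_div_eq_self_iff {K : Type*} [Field K] {a x d : K} (hd : d ≠ 0) :
    a * x / d = x ↔ x = 0 ∨ a = d := by
  rw [div_eq_iff hd, ← sub_eq_zero, show a * x - x * d = x * (a - d) by ring, mul_eq_zero,
    sub_eq_zero]

theorem mul_eq_add_sub_mul_iff {K : Type*} [Field K] {β γ c x : K} (hc : c ≠ 1) :
    γ * β = x + (β - x) * c ↔ x = β * (γ - c) / (1 - c) := by
  have h1c : 1 - c ≠ 0 := sub_ne_zero.mpr hc.symm
  rw [eq_div_iff h1c]
  constructor <;> intro h <;> linear_combination -h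

theorem add_sub_mul_pos {β c x : ℝ} (hβ : 0 < β) (hc : 0 < c) (hx : x ∈ Set.Icc 0 β) :
    0 < x + (β - x) * c := by
  obtain ⟨hx0, hxβ⟩ := hx
  rcases hx0.eq_or_lt with rfl | hx0
  · simpa using mul_pos hβ hc
  · have : 0 ≤ (β - x) * c := mul_nonneg (sub_nonneg.mpr hxβ) hc.le
    linarith

theorem mul_sub_div_one_sub_mem_Ioo {β γ c : ℝ} (hβ : 0 < β) (hc : c < γ) (hγ : γ < 1) :
    β * (γ - c) / (1 - c) ∈ Set.Ioo 0 β := by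
  have h1c : 0 < 1 - c := by linarith
  constructor
  · exact div_pos (mul_pos hβ (sub_pos.mpr hc)) h1c
  · rw [div_lt_iff₀ h1c]
    exact mul_lt_mul_of_pos_left (by linarith) hβ

theorem logistic_poincare_fixed_points_general (α β T γ c : ℝ)
    (hβ : 0 < β) (hγ1 : γ < 1)
    (hc : c = Real.exp (-α * T)) (hcγ : c < γ)
    (P : ℝ → ℝ) (hP : ∀ x : ℝ, P x = γ * β * x / (x + (β - x) * c)) :
    (∀ x ∈ Set.Icc (0 : ℝ) β,
      (P x = x ↔ x = 0 ∨ x = β * (γ - c) / (1 - c))) ∧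
    0 < β * (γ - c) / (1 - c) ∧ β * (γ - c) / (1 - c) < β := by
  have hc0 : 0 < c := hc ▸ Real.exp_pos _
  refine ⟨fun x hx => ?_, mul_sub_div_one_sub_mem_Ioo hβ hcγ hγ1⟩
  rw [hP, mul_div_eq_self_iff (add_sub_mul_pos hβ hc0 hx).ne',
    mul_eq_add_sub_mul_iff (by linarith : c ≠ 1)]

/-- With `c = e^{−αT}` and `P(x) = γ·β·x / (x + (β − x)·c)`,
if `c < γ` then `P` has exactly two fixed points in `[0, β]`, namely `0` and
`x* = β·(γ − c)/(1 − c)`, and `0 < x* < β`. -/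
theorem logistic_poincare_fixed_points (α β T γ c : ℝ)
    (hα : 0 < α) (hβ : 0 < β) (hT : 0 < T) (hγ0 : 0 < γ) (hγ1 : γ < 1)
    (hc : c = Real.exp (-α * T)) (hcγ : c < γ)
    (P : ℝ → ℝ) (hP : ∀ x : ℝ, P x = γ * β * x / (x + (β - x) * c)) :
    (∀ x ∈ Set.Icc (0 : ℝ) β,
      (P x = x ↔ x = 0 ∨ x = β * (γ - c) / (1 - c))) ∧
    0 < β * (γ - c) / (1 - c) ∧ β * (γ - c) / (1 - c) < β :=
  logistic_poincare_fixed_points_general α β T γ c hβ hγ1 hc hcγ P hP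
end

section
/- Let α > 0, β > 0, T > 0 and 0 < γ < 1, set c = e^{−αT}, and assume γ ≤ c. Let P : [0, β] → [0, β] be the map P(x) = γ·β·x / (x + (β − x)·c). Then for every initial value x₀ ∈ [0, β], the sequence of iterates x_{n+1} = P(x_n) converges to 0 as n → ∞. -/
/-!
On `[0, β]` the resetting map `P` lies below the diagonal: `x - P x` is `x / D(x)` times
`x (1 - γ) + (β - x) (c - γ)`, where `D(x) = x + (β - x) c`, and this factor is nonnegative
when `γ ≤ c` and `γ < 1`, and positive for `x > 0`. Hence every orbit decreases to a fixed point
of `P` in `[0, β]`, and the only such fixed point is `0`.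
-/

open Filter Set Topology

section MonotoneOrbit

variable {α : Type*} [ConditionallyCompleteLinearOrder α] [TopologicalSpace α] [OrderTopology α]

theorem tendsto_of_succ_eq_of_le_self {f : α → α} {a b : α} (hmaps : MapsTo f (Icc a b) (Icc a b))
    (hle : ∀ y ∈ Icc a b, f y ≤ y) (hcont : ∀ y ∈ Icc a b, ContinuousAt f y)
    (hfix : ∀ y ∈ Icc a b, f y = y → y = a) {u : ℕ → α} (hu₀ : u 0 ∈ Icc a b)
    (hsucc : ∀ n, u (n + 1) = f (u n)) : Tendsto u atTop (𝓝 a) := by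
  have hmem : ∀ n, u n ∈ Icc a b := by
    intro n
    induction n with
    | zero => exact hu₀
    | succ n ih => exact hsucc n ▸ hmaps ih
  have hanti : Antitone u :=
    antitone_nat_of_succ_le fun n => (hsucc n).symm ▸ hle _ (hmem n)
  have hbdd : BddBelow (range u) := ⟨a, forall_mem_range.2 fun n => (hmem n).1⟩
  have hlim := tendsto_atTop_ciInf hanti hbdd
  have hL : ⨅ n, u n ∈ Icc a b := isClosed_Icc.mem_of_tendsto hlim (Eventually.of_forall hmem)
  have hshift : Tendsto (fun n => f (u n)) atTop (𝓝 (⨅ n, u n)) := by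
    simpa only [hsucc] using (tendsto_add_atTop_iff_nat 1).2 hlim
  have hfixL : f (⨅ n, u n) = ⨅ n, u n :=
    tendsto_nhds_unique ((hcont _ hL).tendsto.comp hlim) hshift
  rwa [hfix _ hL hfixL] at hlim

end MonotoneOrbit

noncomputable def resettingMap (β γ c y : ℝ) : ℝ := γ * β * y / (y + (β - y) * c)

section ResettingMap

variable {β γ c y : ℝ}

theorem mul_le_add_sub_mul (hγ1 : γ ≤ 1) (hγc : γ ≤ c) (hy : y ∈ Icc 0 β) :
    γ * β ≤ y + (β - y) * c := by
  nlinarith [mul_nonneg hy.1 (sub_nonneg.2 hγ1), mul_nonneg (sub_nonneg.2 hy.2) (sub_nonneg.2 hγc)]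

theorem mul_lt_add_sub_mul (hγ1 : γ < 1) (hγc : γ ≤ c) (hy0 : 0 < y) (hyβ : y ≤ β) :
    γ * β < y + (β - y) * c := by
  nlinarith [mul_pos hy0 (sub_pos.2 hγ1), mul_nonneg (sub_nonneg.2 hyβ) (sub_nonneg.2 hγc)]

theorem add_sub_mul_pos_s10 (hβ : 0 < β) (hγ0 : 0 < γ) (hγ1 : γ ≤ 1) (hγc : γ ≤ c)
    (hy : y ∈ Icc 0 β) : 0 < y + (β - y) * c :=
  (mul_pos hγ0 hβ).trans_le (mul_le_add_sub_mul hγ1 hγc hy)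

theorem resettingMap_le_self (hβ : 0 < β) (hγ0 : 0 < γ) (hγ1 : γ ≤ 1) (hγc : γ ≤ c)
    (hy : y ∈ Icc 0 β) : resettingMap β γ c y ≤ y := by
  rw [resettingMap, div_le_iff₀ (add_sub_mul_pos_s10 hβ hγ0 hγ1 hγc hy), mul_comm y]
  exact mul_le_mul_of_nonneg_right (mul_le_add_sub_mul hγ1 hγc hy) hy.1

theorem mapsTo_resettingMap (hβ : 0 < β) (hγ0 : 0 < γ) (hγ1 : γ ≤ 1) (hγc : γ ≤ c) :
    MapsTo (resettingMap β γ c) (Icc 0 β) (Icc 0 β) := fun y hy =>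
  ⟨div_nonneg (by have := hy.1; positivity) (add_sub_mul_pos_s10 hβ hγ0 hγ1 hγc hy).le,
    (resettingMap_le_self hβ hγ0 hγ1 hγc hy).trans hy.2⟩

theorem continuousAt_resettingMap (hβ : 0 < β) (hγ0 : 0 < γ) (hγ1 : γ ≤ 1) (hγc : γ ≤ c)
    (hy : y ∈ Icc 0 β) : ContinuousAt (resettingMap β γ c) y :=
  (continuousAt_id.const_mul _).div (by fun_prop) (add_sub_mul_pos_s10 hβ hγ0 hγ1 hγc hy).ne'

theorem eq_zero_of_resettingMap_eq_self (hβ : 0 < β) (hγ0 : 0 < γ) (hγ1 : γ < 1) (hγc : γ ≤ c)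
    (hy : y ∈ Icc 0 β) (hfix : resettingMap β γ c y = y) : y = 0 := by
  by_contra hne
  have hy0 : 0 < y := hy.1.lt_of_ne' hne
  rw [resettingMap, div_eq_iff (add_sub_mul_pos_s10 hβ hγ0 hγ1.le hγc hy).ne', mul_comm y] at hfix
  exact (mul_lt_add_sub_mul hγ1 hγc hy0 hy.2).ne (mul_right_cancel₀ hy0.ne' hfix)

end ResettingMap

theorem logistic_resetting_extinction_general (β γ c : ℝ)
    (hβ : 0 < β) (hγ0 : 0 < γ) (hγ1 : γ < 1)
    (hγc : γ ≤ c)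
    (P : ℝ → ℝ) (hP : ∀ x : ℝ, P x = γ * β * x / (x + (β - x) * c))
    (x : ℕ → ℝ) (hx0 : x 0 ∈ Set.Icc (0 : ℝ) β)
    (hrec : ∀ n : ℕ, x (n + 1) = P (x n)) :
    Filter.Tendsto x Filter.atTop (nhds 0) := by
  obtain rfl : P = resettingMap β γ c := funext hP
  exact tendsto_of_succ_eq_of_le_self (mapsTo_resettingMap hβ hγ0 hγ1.le hγc)
    (fun _ => resettingMap_le_self hβ hγ0 hγ1.le hγc)
    (fun _ => continuousAt_resettingMap hβ hγ0 hγ1.le hγc)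
    (fun _ => eq_zero_of_resettingMap_eq_self hβ hγ0 hγ1 hγc) hx0 hrec

/-- With `c = e^{−αT}` and `P(x) = γ·β·x / (x + (β − x)·c)`,
if `γ ≤ c` then for every initial value `x₀ ∈ [0, β]` the iterates
`x_{n+1} = P(x_n)` converge to `0`. -/
theorem logistic_resetting_extinction (α β T γ c : ℝ)
    (hα : 0 < α) (hβ : 0 < β) (hT : 0 < T) (hγ0 : 0 < γ) (hγ1 : γ < 1)
    (hc : c = Real.exp (-α * T)) (hγc : γ ≤ c)
    (P : ℝ → ℝ) (hP : ∀ x : ℝ, P x = γ * β * x / (x + (β - x) * c))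
    (x : ℕ → ℝ) (hx0 : x 0 ∈ Set.Icc (0 : ℝ) β)
    (hrec : ∀ n : ℕ, x (n + 1) = P (x n)) :
    Filter.Tendsto x Filter.atTop (nhds 0) :=
  logistic_resetting_extinction_general β γ c hβ hγ0 hγ1 hγc P hP x hx0 hrec
end
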